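/- Let Y be a topological space and α an ordinal with α + 1 < Sh(Y). Then the sequential Cantor-Bendixson level SI_α(Y) is infinite. -/

import Mathlib

open Filter Topology Set

/-- Sequential Cantor-Bendixson levels. -/
noncomputable def SI (Y : Type) [TopologicalSpace Y] : Ordinal.{0} → Set Y :=
  fun α =>
    {x | (∀ β, β < α → x ∉ SI Y β) ∧
      ¬ ∃ s : ℕ → Y, Function.Injective s ∧ (∀ n, ∀ β, β < α → s n ∉ SI Y β) ∧
        Filter.Tendsto s Filter.atTop (nhds x)}
termination_by α => α
decreasing_by all_goals assumption

/-- The sequential height of `Y`. -/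
noncomputable def Sh (Y : Type) [TopologicalSpace Y] : Ordinal.{0} :=
  sInf {α | SI Y α = ∅}

/-!
A point `x` of `SI Y (α + 1)` is not in `SI Y α`, so some injective sequence avoiding the levels
below `α` converges to `x`. Were only finitely many of its terms in `SI Y α`, a tail of it would
avoid every level `≤ α`, contradicting `x ∈ SI Y (α + 1)`. Hence infinitely many distinct terms
lie in `SI Y α`.
-/

section SequentialCantorBendixson

variable {Y : Type} [TopologicalSpace Y]

theorem mem_SI_iff {α : Ordinal.{0}} {x : Y} :
    x ∈ SI Y α ↔ (∀ β, β < α → x ∉ SI Y β) ∧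
      ¬ ∃ s : ℕ → Y, Function.Injective s ∧ (∀ n, ∀ β, β < α → s n ∉ SI Y β) ∧
        Tendsto s atTop (𝓝 x) := by
  conv_lhs => rw [SI]
  rfl

theorem SI_nonempty_of_lt_Sh {α : Ordinal.{0}} (h : α < Sh Y) : (SI Y α).Nonempty :=
  nonempty_iff_ne_empty.2 fun he => (csInf_le' (s := {α | SI Y α = ∅}) he).not_gt h

theorem exists_injective_tendsto_of_notMem_SI {α : Ordinal.{0}} {x : Y}
    (hlow : ∀ β, β < α → x ∉ SI Y β) (hx : x ∉ SI Y α) :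
    ∃ s : ℕ → Y, Function.Injective s ∧ (∀ n, ∀ β, β < α → s n ∉ SI Y β) ∧
      Tendsto s atTop (𝓝 x) := by
  by_contra hs
  exact hx (mem_SI_iff.2 ⟨hlow, hs⟩)

theorem frequently_mem_SI_of_tendsto_mem_SI_succ {α : Ordinal.{0}} {x : Y}
    (hx : x ∈ SI Y (α + 1)) {s : ℕ → Y} (hs_inj : Function.Injective s)
    (hs_low : ∀ n, ∀ β, β < α → s n ∉ SI Y β) (hs : Tendsto s atTop (𝓝 x)) :
    ∃ᶠ n in atTop, s n ∈ SI Y α := by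
  intro hev
  obtain ⟨N, hN⟩ := eventually_atTop.1 hev
  refine (mem_SI_iff.1 hx).2 ⟨fun n => s (n + N), hs_inj.comp (add_left_injective N),
    fun n β hβ => ?_, hs.comp (tendsto_add_atTop_nat N)⟩
  rcases (Order.lt_add_one_iff.1 hβ).lt_or_eq with hβ | rfl
  · exact hs_low _ β hβ
  · exact hN _ (Nat.le_add_left N n)

end SequentialCantorBendixson

/-- If `α + 1 < Sh Y` then the level `SI Y α` is infinite. -/
theorem SI_infinite (Y : Type) [TopologicalSpace Y]
    (α : Ordinal.{0}) (h : α + 1 < Sh Y) : (SI Y α).Infinite := by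
  obtain ⟨x, hx⟩ := SI_nonempty_of_lt_Sh h
  have hx_low : ∀ β, β < α + 1 → x ∉ SI Y β := (mem_SI_iff.1 hx).1
  obtain ⟨s, hs_inj, hs_low, hs⟩ := exists_injective_tendsto_of_notMem_SI
    (fun β hβ => hx_low β (hβ.trans (lt_add_one α)))
    (hx_low α (lt_add_one α))
  have hfreq := frequently_mem_SI_of_tendsto_mem_SI_succ hx hs_inj hs_low hs
  exact ((Nat.frequently_atTop_iff_infinite.1 hfreq).image hs_inj.injOn).mono
    (image_subset_iff.2 fun _ hn => hn)
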